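/- arXiv:1705.05650 — 3 statements merged into one kernel-verified Lean document; each statement's English description precedes it below -/
import Mathlib

section
/- The Kleisli lifting satisfies (R ∘ S)_∘ = R_∘ ; S_∘, where ; denotes ordinary relational composition: for multirelations R ⊆ Y × ℘(Z) and S ⊆ Z × ℘(W), the Kleisli lifting of the Kleisli composition equals the relational composite of the Kleisli liftings. -/
open Set

/-- Ordinary relational composition. -/
def relComp {A B C : Type*} (R : Set (A × B)) (S : Set (B × C)) : Set (A × C) :=
  {p | ∃ b, (p.1, b) ∈ R ∧ (b, p.2) ∈ S}

/-- Kleisli composition of multirelations. -/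
def kleisliComp {X Y Z : Type*} (R : Set (X × Set Y)) (S : Set (Y × Set Z)) :
    Set (X × Set Z) :=
  {p | ∃ B, (p.1, B) ∈ R ∧ p.2 = ⋃₀ {C | ∃ b ∈ B, (b, C) ∈ S}}

/-- Kleisli lifting of a multirelation. -/
def kleisliLift {Y Z : Type*} (S : Set (Y × Set Z)) : Set (Set Y × Set Z) :=
  {p | p.2 = ⋃₀ {C | ∃ b ∈ p.1, (b, C) ∈ S}}

/-- Parikh lifting of a multirelation. -/
def parikhLift {Y Z : Type*} (S : Set (Y × Set Z)) : Set (Set Y × Set Z) :=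
  {p | ∀ b ∈ p.1, (b, p.2) ∈ S}

/-- Parikh composition of multirelations. -/
def parikhComp {X Y Z : Type*} (R : Set (X × Set Y)) (S : Set (Y × Set Z)) :
    Set (X × Set Z) :=
  {p | ∃ B, (p.1, B) ∈ R ∧ ∀ b ∈ B, (b, p.2) ∈ S}

/-- Peleg composition of multirelations. -/
def pelegComp {X Y Z : Type*} (R : Set (X × Set Y)) (S : Set (Y × Set Z)) :
    Set (X × Set Z) :=
  {p | ∃ B, (p.1, B) ∈ R ∧
    ∃ f : Y → Set Z, (∀ b ∈ B, (b, f b) ∈ S) ∧ p.2 = ⋃ b ∈ B, f b}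

/-- Peleg lifting of a multirelation. -/
def pelegLift {Y Z : Type*} (S : Set (Y × Set Z)) : Set (Set Y × Set Z) :=
  {p | ∃ f : Y → Set Z, (∀ b ∈ p.1, (b, f b) ∈ S) ∧ p.2 = ⋃ b ∈ p.1, f b}

/-- The singleton map 1_Y = {(y,{y})}. -/
def singletonMap (Y : Type*) : Set (Y × Set Y) := {p | p.2 = {p.1}}

/-- Converse of the membership relation: {(y,A) | y ∈ A}. -/
def memConv (Y : Type*) : Set (Y × Set Y) := {p | p.1 ∈ p.2}

/-- The inclusion relation Ξ on the powerset. -/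
def inclRel (Z : Type*) : Set (Set Z × Set Z) := {p | p.1 ⊆ p.2}

/-- Up-closed multirelations. -/
def upClosed {X Y : Type*} (R : Set (X × Set Y)) : Prop :=
  ∀ a B C, (a, B) ∈ R → B ⊆ C → (a, C) ∈ R

/-- Univalent relations (partial functions). -/
def isUnivalent {A B : Type*} (f : Set (A × B)) : Prop :=
  ∀ x y y', (x, y) ∈ f → (x, y') ∈ f → y = y'

/-- Domain of a relation. -/
def relDom {A B : Type*} (f : Set (A × B)) : Set A := {x | ∃ y, (x, y) ∈ f}

/-- Union-closed multirelations. -/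
def unionClosed {Z W : Type*} (T : Set (Z × Set W)) : Prop :=
  ∀ z (𝔅 : Set (Set W)), 𝔅.Nonempty → (∀ B ∈ 𝔅, (z, B) ∈ T) → (z, ⋃₀ 𝔅) ∈ T

/-! `kleisliLift S` is the graph of the function `B ↦ ⋃ {C | ∃ b ∈ B, (b, C) ∈ S}`. This function
preserves unions, so it turns Kleisli composition into function composition, and the relational
composite of two graphs of functions is the graph of the composite function. -/

section Kleisli

variable {X Y Z : Type*}

def kleisliImage (S : Set (Y × Set Z)) (B : Set Y) : Set Z :=
  ⋃₀ {C | ∃ b ∈ B, (b, C) ∈ S}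

theorem kleisliLift_eq_graph (S : Set (Y × Set Z)) :
    kleisliLift S = {p | p.2 = kleisliImage S p.1} :=
  rfl

theorem mem_kleisliImage {S : Set (Y × Set Z)} {B : Set Y} {z : Z} :
    z ∈ kleisliImage S B ↔ ∃ b ∈ B, ∃ C, (b, C) ∈ S ∧ z ∈ C := by
  simp only [kleisliImage, mem_sUnion, mem_ofPred_eq]
  grind

theorem kleisliImage_sUnion (S : Set (Y × Set Z)) (𝒟 : Set (Set Y)) :
    kleisliImage S (⋃₀ 𝒟) = ⋃₀ (kleisliImage S '' 𝒟) := by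
  ext z
  simp only [mem_kleisliImage, mem_sUnion, sUnion_image, mem_iUnion₂]
  grind

theorem mem_kleisliComp {R : Set (X × Set Y)} {S : Set (Y × Set Z)} {a : X} {A : Set Z} :
    (a, A) ∈ kleisliComp R S ↔ ∃ B, (a, B) ∈ R ∧ A = kleisliImage S B :=
  Iff.rfl

theorem kleisliImage_kleisliComp (R : Set (X × Set Y)) (S : Set (Y × Set Z)) (B : Set X) :
    kleisliImage (kleisliComp R S) B = kleisliImage S (kleisliImage R B) := by
  have images : {C | ∃ a ∈ B, (a, C) ∈ kleisliComp R S} =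
      kleisliImage S '' {D | ∃ a ∈ B, (a, D) ∈ R} := by
    ext C
    simp only [mem_ofPred_eq, mem_image, mem_kleisliComp]
    grind
  calc kleisliImage (kleisliComp R S) B
      = ⋃₀ (kleisliImage S '' {D | ∃ a ∈ B, (a, D) ∈ R}) := congrArg sUnion images
    _ = kleisliImage S (kleisliImage R B) := (kleisliImage_sUnion S _).symm

end Kleisli

theorem relComp_graph {A B C : Type*} (f : A → B) (g : B → C) :
    relComp {p | p.2 = f p.1} {p | p.2 = g p.1} = {p | p.2 = g (f p.1)} := by
  ext ⟨a, c⟩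
  simp only [relComp, mem_ofPred_eq, exists_eq_left]

theorem kleisliLift_comp_general {Y Z W : Type*} (R : Set (Y × Set Z)) (S : Set (Z × Set W)) :
    kleisliLift (kleisliComp R S) = relComp (kleisliLift R) (kleisliLift S) := by
  simp only [kleisliLift_eq_graph, kleisliImage_kleisliComp, relComp_graph]

theorem kleisliLift_comp {X Y Z W : Type*} (R : Set (Y × Set Z)) (S : Set (Z × Set W)) :
    kleisliLift (kleisliComp R S) = relComp (kleisliLift R) (kleisliLift S) :=
  kleisliLift_comp_general R S
end

section
/- Peleg composition is not associative in general: with X = {a,b}, α = {(a,{a,b}), (a,{a}), (b,{a})} and β = {(a,{a}), (a,{b})}, one has (α ∗ α) ∗ β = {(a,{a}),(a,{b}),(b,{a}),(b,{b})} while α ∗ (α ∗ β) = {(a,{a}),(a,{b}),(b,{a}),(b,{b}),(a,{a,b})}, so (α ∗ α) ∗ β ≠ α ∗ (α ∗ β). -/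
open Set

/-! The witness is `(a, {a, b})`, with `a, b` read as `0, 1 : Fin 2`. In `α ∗ (α ∗ β)` it arises
from `(a, {a, b}) ∈ α` by sending `a ↦ {a}` and `b ↦ {b}` in `α ∗ β`, which relates both points
to both singletons. In `(α ∗ α) ∗ β` it cannot arise: `β` relates nothing to `b`, so of the sets that
`α ∗ α` produces, only `{a}` has a Peleg image under `β`, and its images are singletons. -/

section PelegLift

variable {X Y Z : Type*} {S : Set (Y × Set Z)}

@[simp]
theorem mem_pelegComp_iff {R : Set (X × Set Y)} {x : X} {A : Set Z} :
    (x, A) ∈ pelegComp R S ↔ ∃ B, (x, B) ∈ R ∧ (B, A) ∈ pelegLift S :=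
  Iff.rfl

theorem mem_pelegLift_iff {B : Set Y} {A : Set Z} :
    (B, A) ∈ pelegLift S ↔ ∃ f : Y → Set Z, (∀ b ∈ B, (b, f b) ∈ S) ∧ A = ⋃ b ∈ B, f b :=
  Iff.rfl

@[simp]
theorem empty_mem_pelegLift_iff {A : Set Z} : (∅, A) ∈ pelegLift S ↔ A = ∅ := by
  simp [mem_pelegLift_iff]

@[simp]
theorem insert_mem_pelegLift_iff {b : Y} {B : Set Y} (hb : b ∉ B) {A : Set Z} :
    (insert b B, A) ∈ pelegLift S ↔
      ∃ C D, (b, C) ∈ S ∧ (B, D) ∈ pelegLift S ∧ A = C ∪ D := by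
  classical
  simp only [mem_pelegLift_iff]
  constructor
  · rintro ⟨f, hf, rfl⟩
    exact ⟨f b, ⋃ c ∈ B, f c, hf b (mem_insert b B),
      ⟨f, fun c hc => hf c (mem_insert_of_mem b hc), rfl⟩, biUnion_insert b B f⟩
  · rintro ⟨C, D, hC, ⟨f, hf, rfl⟩, rfl⟩
    have hfB : ∀ c ∈ B, Function.update f b C c = f c := fun c hc =>
      Function.update_of_ne (ne_of_mem_of_not_mem hc hb) C f
    refine ⟨Function.update f b C, ?_, ?_⟩
    · rintro c (rfl | hc)
      · simpa using hC
      · simpa [hfB c hc] using hf c hc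
    · rw [biUnion_insert, Function.update_self, iUnion₂_congr hfB]

@[simp]
theorem singleton_mem_pelegLift_iff {b : Y} {A : Set Z} :
    ({b}, A) ∈ pelegLift S ↔ (b, A) ∈ S := by
  rw [← insert_empty_eq, insert_mem_pelegLift_iff (notMem_empty b)]
  simp

end PelegLift

theorem peleg_not_assoc :
    let α : Set (Fin 2 × Set (Fin 2)) :=
      {p | (p.1 = 0 ∧ p.2 = {0, 1}) ∨ (p.1 = 0 ∧ p.2 = {0}) ∨ (p.1 = 1 ∧ p.2 = {0})}
    let β : Set (Fin 2 × Set (Fin 2)) :=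
      {p | (p.1 = 0 ∧ p.2 = {0}) ∨ (p.1 = 0 ∧ p.2 = {1})}
    pelegComp (pelegComp α α) β =
      {p | (p.1 = 0 ∧ p.2 = {0}) ∨ (p.1 = 0 ∧ p.2 = {1}) ∨
           (p.1 = 1 ∧ p.2 = {0}) ∨ (p.1 = 1 ∧ p.2 = {1})} ∧
    pelegComp α (pelegComp α β) =
      {p | (p.1 = 0 ∧ p.2 = {0}) ∨ (p.1 = 0 ∧ p.2 = {1}) ∨
           (p.1 = 1 ∧ p.2 = {0}) ∨ (p.1 = 1 ∧ p.2 = {1}) ∨ (p.1 = 0 ∧ p.2 = {0, 1})} ∧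
    pelegComp (pelegComp α α) β ≠ pelegComp α (pelegComp α β) := by
  intro α β
  have hαα : pelegComp α α = {p | (p.1 = 0 ∧ p.2 = {0, 1}) ∨ (p.1 = 0 ∧ p.2 = {0}) ∨
      (p.1 = 1 ∧ p.2 = {0, 1}) ∨ (p.1 = 1 ∧ p.2 = {0})} := by
    ext ⟨x, A⟩
    simp [α, or_and_right, exists_or]
    tauto
  have hαβ : pelegComp α β = {p | (p.1 = 0 ∧ p.2 = {0}) ∨ (p.1 = 0 ∧ p.2 = {1}) ∨
      (p.1 = 1 ∧ p.2 = {0}) ∨ (p.1 = 1 ∧ p.2 = {1})} := by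
    ext ⟨x, A⟩
    simp [α, β, or_and_right, exists_or]
    tauto
  refine ⟨?_, ?_, fun h => ?_⟩
  · rw [hαα]
    ext ⟨x, A⟩
    simp [β, or_and_right, exists_or]
    tauto
  · rw [hαβ]
    ext ⟨x, A⟩
    simp [α, or_and_right, exists_or]
    rw [pair_comm 1 0]
    tauto
  · have hmem : ((0 : Fin 2), ({0, 1} : Set (Fin 2))) ∈ pelegComp (pelegComp α α) β := by
      rw [h, hαβ]
      simp [α]
    rw [hαα] at hmem
    simp [β] at hmem
    simp [Set.ext_iff] at hmem
end

section
/- If the third multirelation is a partial function, Peleg composition is associative: for any multirelations R ⊆ X × ℘(Y), S ⊆ Y × ℘(Z) and any univalent multirelation g ⊆ Z × ℘(W), (R ∗ S) ∗ g = R ∗ (S ∗ g). -/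
open Set

/-!
The inclusion `(R ∗ S) ∗ T ⊆ R ∗ (S ∗ T)` holds for every `T`: the witnesses compose pointwise.
Conversely, a witness of `R ∗ (S ∗ T)` chooses for each `b` its own function selecting values of
`T`, and two such functions may disagree at a point `c` reached from different `b`, so they need
not glue to a single witness of `(R ∗ S) ∗ T`. When `T` is univalent they all agree with one
global selector of `T`, which is then that witness.
-/

theorem biUnion_biUnion_eq {α β γ : Type*} (s : Set α) (t : α → Set β) (u : β → Set γ) :
    ⋃ y ∈ ⋃ x ∈ s, t x, u y = ⋃ x ∈ s, ⋃ y ∈ t x, u y := by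
  simp only [biUnion_iUnion]

theorem pelegComp_pelegComp_subset {X Y Z W : Type*} (R : Set (X × Set Y))
    (S : Set (Y × Set Z)) (T : Set (Z × Set W)) :
    pelegComp (pelegComp R S) T ⊆ pelegComp R (pelegComp S T) := by
  rintro ⟨a, _⟩ ⟨_, ⟨B, hB, f, hf, rfl⟩, h, hh, rfl⟩
  refine ⟨B, hB, fun b => ⋃ c ∈ f b, h c, fun b hb =>
    ⟨f b, hf b hb, h, fun c hc => hh c (mem_biUnion hb hc), rfl⟩, biUnion_biUnion_eq ..⟩

theorem isUnivalent.exists_eq_of_mem {A B : Type*} [Nonempty B] {f : Set (A × B)}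
    (hf : isUnivalent f) : ∃ h : A → B, ∀ a b, (a, b) ∈ f → h a = b :=
  ⟨fun a => Classical.epsilon fun b => (a, b) ∈ f,
    fun a b hab => hf a _ _ (Classical.epsilon_spec (p := fun b => (a, b) ∈ f) ⟨b, hab⟩) hab⟩

section Selector

variable {Y Z W : Type*} {T : Set (Z × Set W)} {H : Z → Set W}

theorem exists_of_mem_pelegComp_of_selector (hH : ∀ c D, (c, D) ∈ T → H c = D)
    {S : Set (Y × Set Z)} {b : Y} {A : Set W} (hbA : (b, A) ∈ pelegComp S T) :
    ∃ C, (b, C) ∈ S ∧ (∀ c ∈ C, (c, H c) ∈ T) ∧ A = ⋃ c ∈ C, H c := by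
  obtain ⟨C, hC, h, hh, rfl⟩ := hbA
  have hHh : ∀ c ∈ C, H c = h c := fun c hc => hH c _ (hh c hc)
  refine ⟨C, hC, fun c hc => hHh c hc ▸ hh c hc, ?_⟩
  exact biSup_congr hHh |>.symm

theorem pelegComp_pelegComp_superset_of_selector (hH : ∀ c D, (c, D) ∈ T → H c = D)
    {X : Type*} (R : Set (X × Set Y)) (S : Set (Y × Set Z)) :
    pelegComp R (pelegComp S T) ⊆ pelegComp (pelegComp R S) T := by
  rintro ⟨a, _⟩ ⟨B, hB, k, hk, rfl⟩
  choose! C hCS hCT hkC using fun b hb => exists_of_mem_pelegComp_of_selector hH (hk b hb)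
  refine ⟨⋃ b ∈ B, C b, ⟨B, hB, C, hCS, rfl⟩, H, ?_, ?_⟩
  · simp only [mem_iUnion₂]
    rintro c ⟨b, hb, hc⟩
    exact hCT b hb c hc
  · rw [biUnion_biUnion_eq]
    exact biSup_congr hkC

end Selector

theorem peleg_assoc_of_pfn {X Y Z W : Type*} (R : Set (X × Set Y)) (S : Set (Y × Set Z))
    (g : Set (Z × Set W)) (hg : isUnivalent g) :
    pelegComp (pelegComp R S) g = pelegComp R (pelegComp S g) := by
  obtain ⟨H, hH⟩ := hg.exists_eq_of_mem
  exact (pelegComp_pelegComp_subset R S g).antisymm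
    (pelegComp_pelegComp_superset_of_selector hH R S)
end
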